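/- arXiv:2502.04758 — 3 statements merged into one kernel-verified Lean document; each statement's English description precedes it below -/
import Mathlib

section
/- Let η > 0 and γ > 0 be real numbers with η/(1+γ) > 1, and define γ̃ = γ + (1+γ)/(η/(1+γ) − 1). If a real number a satisfies η/(1+γ) ≤ a ≤ (1+γ)η, then every real number a' with a − 1 ≤ a' ≤ a + 1 satisfies η/(1+γ̃) ≤ a' ≤ (1+γ̃)η. Moreover γ̃ is the smallest value with this property, i.e., for any γ' with 1/(1+γ') ≤ a'/η ≤ 1+γ' holding for all such a and a', one has γ' ≥ γ̃. -/
/-- Lemma 1 of the paper: a `γ`-typical user remains `γ̃`-typical for a neighbouring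
database, and `γ̃ = γ + (1+γ)/(η/(1+γ) − 1)` is the smallest such value. -/
theorem typical_user_neighbouring (η γ : ℝ) (hη : 0 < η) (hγ : 0 < γ)
    (h : 1 < η / (1 + γ))
    (γt : ℝ) (hγt : γt = γ + (1 + γ) / (η / (1 + γ) - 1)) :
    (∀ a a' : ℝ, η / (1 + γ) ≤ a → a ≤ (1 + γ) * η →
      a - 1 ≤ a' → a' ≤ a + 1 →
      η / (1 + γt) ≤ a' ∧ a' ≤ (1 + γt) * η) ∧
    (∀ γ' : ℝ,
      (∀ a a' : ℝ, η / (1 + γ) ≤ a → a ≤ (1 + γ) * η →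
        a - 1 ≤ a' → a' ≤ a + 1 →
        1 / (1 + γ') ≤ a' / η ∧ a' / η ≤ 1 + γ') →
      γt ≤ γ') := by
  have hc : (0:ℝ) < 1 + γ := by linarith
  have hx : (0:ℝ) < η / (1 + γ) - 1 := by linarith
  have hxne : η / (1 + γ) - 1 ≠ 0 := ne_of_gt hx
  have hne2 : η - (1 + γ) ≠ 0 := by
    intro h0
    have : η / (1 + γ) = 1 := by field_simp; linarith
    linarith
  have key : 1 + γt = η / (η / (1 + γ) - 1) := by
    rw [hγt]; field_simp; ring
  have hγt0 : (0:ℝ) < 1 + γt := by rw [key]; positivity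
  have hlow : η / (1 + γt) = η / (1 + γ) - 1 := by
    rw [key]; field_simp
  -- t := η/(1+γ), η = t*(1+γ)
  have hteq : η = (η / (1 + γ)) * (1 + γ) := by field_simp
  have hupper : (1 + γ) * η + 1 ≤ (1 + γt) * η := by
    rw [key, div_mul_eq_mul_div, le_div_iff₀ hx]
    set t := η / (1 + γ) with ht
    nlinarith [hteq, hx, hc, hγ, h]
  constructor
  · intro a a' ha1 ha2 ha3 ha4
    constructor
    · rw [hlow]; linarith
    · linarith
  · intro γ' H
    have h1 : η / (1 + γ) ≤ (1 + γ) * η := by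
      rw [div_le_iff₀ hc]
      nlinarith [mul_pos hγ hη, mul_pos (mul_pos hγ hγ) hη]
    obtain ⟨_, hup⟩ := H ((1 + γ) * η) ((1 + γ) * η + 1) h1 le_rfl
      (by linarith) le_rfl
    have hγ'0 : (0:ℝ) < 1 + γ' := by
      have : (0:ℝ) < ((1 + γ) * η + 1) / η := by positivity
      linarith
    obtain ⟨hlo, _⟩ := H (η / (1 + γ)) (η / (1 + γ) - 1) le_rfl h1
      le_rfl (by linarith)
    -- 1/(1+γ') ≤ (η/(1+γ)-1)/η  ⟹  η ≤ (η/(1+γ)-1)*(1+γ')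
    rw [div_le_div_iff₀ hγ'0 hη] at hlo
    have : 1 + γt ≤ 1 + γ' := by
      rw [key, div_le_iff₀ hx]; linarith
    linarith
end

section
/- Let m, n ≥ 2 and k ≤ min{m, n}. Let u = (u_1, ..., u_m) be distributed uniformly on the unit sphere S^{m−1} ⊆ ℝ^m, let v = (v_1, ..., v_n) be distributed uniformly on the unit sphere S^{n−1} ⊆ ℝ^n, with u and v independent. Let σ_1, ..., σ_k be fixed reals with |σ_ℓ| ≥ σ_min > 0 for all ℓ ≤ k, and suppose 1/(σ_min² · m · n) ≤ 0.01·(1/m² + 1/n²). Define δ := Σ_{ℓ=1}^{k} (v_ℓ² + u_ℓ² + u_ℓ v_ℓ / σ_ℓ). Then Var[δ] ≤ 2.01·k·(1/m² + 1/n²). -/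
open MeasureTheory

/-- `IsUniformOnSphere ν` means `ν` is the uniform (normalized rotation-invariant)
probability measure on the unit sphere `S^{N-1} ⊆ ℝ^N`. -/
def IsUniformOnSphere {N : ℕ} (ν : Measure (EuclideanSpace ℝ (Fin N))) : Prop :=
  IsProbabilityMeasure ν ∧
  ν (Metric.sphere (0 : EuclideanSpace ℝ (Fin N)) 1) = 1 ∧
  ∀ O : EuclideanSpace ℝ (Fin N) ≃ₗᵢ[ℝ] EuclideanSpace ℝ (Fin N),
    ν.map O = ν

open Finset


lemma eunorm {N : ℕ} (x : EuclideanSpace ℝ (Fin N)) : ‖x‖ = Real.sqrt (∑ i, x i ^ 2) := by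
  rw [EuclideanSpace.norm_eq]; congr 1
  exact Finset.sum_congr rfl (fun i _ => by rw [Real.norm_eq_abs, sq_abs])

lemma eunorm_of_sq {N : ℕ} (x y : EuclideanSpace ℝ (Fin N))
    (h : ∑ i, x i ^ 2 = ∑ i, y i ^ 2) : ‖x‖ = ‖y‖ := by rw [eunorm, eunorm, h]

section negC
variable {N : ℕ} (i : Fin N)

def negFun (x : EuclideanSpace ℝ (Fin N)) : EuclideanSpace ℝ (Fin N) :=
  WithLp.toLp 2 (fun t => if t = i then -(x t) else x t)

lemma negFun_add (x y : EuclideanSpace ℝ (Fin N)) :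
    negFun i (x + y) = negFun i x + negFun i y := by
  ext t
  show _ = negFun i x t + negFun i y t
  simp only [negFun, PiLp.add_apply, PiLp.toLp_apply]
  split_ifs <;> ring

lemma negFun_smul (c : ℝ) (x : EuclideanSpace ℝ (Fin N)) :
    negFun i (c • x) = c • negFun i x := by
  ext t
  show _ = c • negFun i x t
  simp only [negFun, PiLp.smul_apply, smul_eq_mul, PiLp.toLp_apply]
  split_ifs <;> ring

lemma negFun_invol (x : EuclideanSpace ℝ (Fin N)) : negFun i (negFun i x) = x := by
  ext t; simp only [negFun, PiLp.toLp_apply]; split_ifs <;> simp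

lemma negFun_norm (x : EuclideanSpace ℝ (Fin N)) : ‖negFun i x‖ = ‖x‖ := by
  refine eunorm_of_sq _ _ (Finset.sum_congr rfl fun t _ => ?_)
  simp only [negFun, PiLp.toLp_apply]; split_ifs <;> ring

noncomputable def negC : EuclideanSpace ℝ (Fin N) ≃ₗᵢ[ℝ] EuclideanSpace ℝ (Fin N) :=
  ⟨{ toFun := negFun i, invFun := negFun i, map_add' := negFun_add i,
     map_smul' := negFun_smul i, left_inv := negFun_invol i, right_inv := negFun_invol i },
   negFun_norm i⟩

lemma negC_apply (x : EuclideanSpace ℝ (Fin N)) (t : Fin N) :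
    negC i x t = if t = i then -(x t) else x t := rfl

end negC

section swapC
variable {N : ℕ} (i j : Fin N)

def swapFun (x : EuclideanSpace ℝ (Fin N)) : EuclideanSpace ℝ (Fin N) :=
  WithLp.toLp 2 (fun t => x (Equiv.swap i j t))

noncomputable def swapC : EuclideanSpace ℝ (Fin N) ≃ₗᵢ[ℝ] EuclideanSpace ℝ (Fin N) :=
  ⟨{ toFun := swapFun i j, invFun := swapFun i j,
     map_add' := fun x y => rfl,
     map_smul' := fun c x => rfl,
     left_inv := fun x => by ext t; exact congrArg x (Equiv.swap_apply_self i j t),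
     right_inv := fun x => by ext t; exact congrArg x (Equiv.swap_apply_self i j t) },
   fun x => eunorm_of_sq _ _ (Fintype.sum_equiv (Equiv.swap i j) _ _ (fun t => rfl))⟩

lemma swapC_apply (x : EuclideanSpace ℝ (Fin N)) (t : Fin N) :
    swapC i j x t = x (Equiv.swap i j t) := rfl

end swapC

lemma sum_split2 {N : ℕ} {i j : Fin N} (hij : i ≠ j) (g : Fin N → ℝ) :
    ∑ t, g t = g i + g j + ∑ t ∈ univ \ {i, j}, g t := by
  rw [Finset.sum_sdiff_eq_sub (Finset.subset_univ _), Finset.sum_pair hij]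
  ring

section rotC
variable {N : ℕ} {i j : Fin N}

noncomputable def rotFun (i j : Fin N) (x : EuclideanSpace ℝ (Fin N)) :
    EuclideanSpace ℝ (Fin N) :=
  WithLp.toLp 2 (fun t => if t = i then (x i + x j) / Real.sqrt 2
    else if t = j then (x i - x j) / Real.sqrt 2 else x t)

lemma rotFun_i (hij : i ≠ j) (x : EuclideanSpace ℝ (Fin N)) :
    rotFun i j x i = (x i + x j) / Real.sqrt 2 := by simp [rotFun]

lemma rotFun_j (hij : i ≠ j) (x : EuclideanSpace ℝ (Fin N)) :
    rotFun i j x j = (x i - x j) / Real.sqrt 2 := by simp [rotFun, Ne.symm hij]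

lemma rotFun_other {t : Fin N} (h1 : t ≠ i) (h2 : t ≠ j)
    (x : EuclideanSpace ℝ (Fin N)) : rotFun i j x t = x t := by simp [rotFun, h1, h2]

lemma rotFun_add (x y : EuclideanSpace ℝ (Fin N)) :
    rotFun i j (x + y) = rotFun i j x + rotFun i j y := by
  ext t
  show _ = rotFun i j x t + rotFun i j y t
  simp only [rotFun, PiLp.add_apply, PiLp.toLp_apply]
  split_ifs <;> ring

lemma rotFun_smul (c : ℝ) (x : EuclideanSpace ℝ (Fin N)) :
    rotFun i j (c • x) = c • rotFun i j x := by
  ext t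
  show _ = c • rotFun i j x t
  simp only [rotFun, PiLp.smul_apply, smul_eq_mul, PiLp.toLp_apply]
  split_ifs <;> ring

lemma rotFun_invol (hij : i ≠ j) (x : EuclideanSpace ℝ (Fin N)) :
    rotFun i j (rotFun i j x) = x := by
  have h2 : Real.sqrt 2 * Real.sqrt 2 = 2 := Real.mul_self_sqrt (by norm_num)
  have hs : Real.sqrt 2 ≠ 0 := by positivity
  ext t
  by_cases h : t = i
  · rw [h, rotFun_i hij, rotFun_i hij, rotFun_j hij]
    field_simp
    linear_combination -(x i) * h2
  · by_cases h' : t = j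
    · rw [h', rotFun_j hij, rotFun_i hij, rotFun_j hij]
      field_simp
      linear_combination -(x j) * h2
    · rw [rotFun_other h h', rotFun_other h h']

lemma rotFun_norm (hij : i ≠ j) (x : EuclideanSpace ℝ (Fin N)) :
    ‖rotFun i j x‖ = ‖x‖ := by
  have h2 : Real.sqrt 2 * Real.sqrt 2 = 2 := Real.mul_self_sqrt (by norm_num)
  have hs : Real.sqrt 2 ≠ 0 := by positivity
  refine eunorm_of_sq _ _ ?_
  rw [sum_split2 hij (fun t => rotFun i j x t ^ 2), sum_split2 hij (fun t => x t ^ 2)]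
  have e1 : ∑ t ∈ univ \ ({i, j} : Finset (Fin N)), rotFun i j x t ^ 2
      = ∑ t ∈ univ \ ({i, j} : Finset (Fin N)), x t ^ 2 := by
    refine Finset.sum_congr rfl fun t ht => ?_
    simp only [Finset.mem_sdiff, Finset.mem_insert, Finset.mem_singleton] at ht
    rw [rotFun_other (fun h => ht.2 (Or.inl h)) (fun h => ht.2 (Or.inr h))]
  rw [e1, rotFun_i hij, rotFun_j hij]
  have : ((x i + x j) / Real.sqrt 2) ^ 2 + ((x i - x j) / Real.sqrt 2) ^ 2
      = x i ^ 2 + x j ^ 2 := by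
    field_simp
    linear_combination (-(x i ^ 2 + x j ^ 2)) * h2
  rw [this]

noncomputable def rotC (hij : i ≠ j) :
    EuclideanSpace ℝ (Fin N) ≃ₗᵢ[ℝ] EuclideanSpace ℝ (Fin N) :=
  ⟨{ toFun := rotFun i j, invFun := rotFun i j, map_add' := rotFun_add,
     map_smul' := rotFun_smul, left_inv := rotFun_invol hij, right_inv := rotFun_invol hij },
   rotFun_norm hij⟩

lemma rotC_apply (hij : i ≠ j) (x : EuclideanSpace ℝ (Fin N)) :
    rotC hij x = rotFun i j x := rfl

end rotC


lemma norm_one_props {N : ℕ} (x : EuclideanSpace ℝ (Fin N)) (h : ‖x‖ = 1) :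
    (∀ i, |x i| ≤ 1) ∧ ∑ i, x i ^ 2 = 1 := by
  have h2 := eunorm x
  have hnn : (0:ℝ) ≤ ∑ t, x t ^ 2 := Finset.sum_nonneg (fun t _ => sq_nonneg (x t))
  have h3 : ∑ t, x t ^ 2 = 1 := by nlinarith [Real.sq_sqrt hnn]
  refine ⟨fun i => ?_, h3⟩
  have h4 : x i ^ 2 ≤ 1 := by
    simpa [h3] using Finset.single_le_sum (f := fun t => x t ^ 2)
      (fun t _ => sq_nonneg (x t)) (Finset.mem_univ i)
  nlinarith [sq_abs (x i), abs_nonneg (x i), sq_nonneg (|x i| - 1)]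

section sphereMoments
variable {N : ℕ} {ν : Measure (EuclideanSpace ℝ (Fin N))}

lemma usph_ae (hν : IsUniformOnSphere ν) :
    ∀ᵐ x ∂ν, (∀ i, |x i| ≤ 1) ∧ ∑ i, x i ^ 2 = 1 := by
  haveI := hν.1
  have hc : ν (Metric.sphere (0 : EuclideanSpace ℝ (Fin N)) 1)ᶜ = 0 :=
    (prob_compl_eq_zero_iff Metric.isClosed_sphere.measurableSet).mpr hν.2.1
  have : ∀ᵐ x ∂ν, x ∈ Metric.sphere (0 : EuclideanSpace ℝ (Fin N)) 1 := by
    rw [ae_iff]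
    convert hc using 2
    rfl
  filter_upwards [this] with x hx
  exact norm_one_props x (by simpa [Metric.mem_sphere, dist_zero_right] using hx)

lemma usph_integrable (hν : IsUniformOnSphere ν) {f : EuclideanSpace ℝ (Fin N) → ℝ}
    (hf : Measurable f) (C : ℝ) (hb : ∀ x, (∀ i, |x i| ≤ 1) → |f x| ≤ C) :
    Integrable f ν := by
  haveI := hν.1
  refine Integrable.mono' (integrable_const C) hf.aestronglyMeasurable ?_
  filter_upwards [usph_ae hν] with x hx
  simpa [Real.norm_eq_abs] using hb x hx.1

lemma usph_map (hν : IsUniformOnSphere ν)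
    (O : EuclideanSpace ℝ (Fin N) ≃ₗᵢ[ℝ] EuclideanSpace ℝ (Fin N))
    {f : EuclideanSpace ℝ (Fin N) → ℝ} (hf : AEStronglyMeasurable f ν) :
    ∫ x, f (O x) ∂ν = ∫ x, f x ∂ν := by
  have h := hν.2.2 O
  calc ∫ x, f (O x) ∂ν = ∫ y, f y ∂(ν.map O) :=
        (integral_map O.continuous.measurable.aemeasurable (h.symm ▸ hf)).symm
    _ = ∫ y, f y ∂ν := by rw [h]

lemma cm {N : ℕ} (i : Fin N) : Measurable (fun x : EuclideanSpace ℝ (Fin N) => x i) :=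
  (measurable_pi_apply i).comp (WithLp.measurable_ofLp 2 _)

-- first moment
lemma usph_int1 (hν : IsUniformOnSphere ν) (i : Fin N) : ∫ x, x i ∂ν = 0 := by
  have h := usph_map hν (negC i) (f := fun x => x i) (cm i).aestronglyMeasurable
  have e : (fun x : EuclideanSpace ℝ (Fin N) => (negC i x) i) = fun x => -(x i) := by
    funext x; rw [negC_apply]; simp
  rw [e, integral_neg] at h
  linarith

lemma usph_int11 (hν : IsUniformOnSphere ν) {i j : Fin N} (hij : i ≠ j) :
    ∫ x, x i * x j ∂ν = 0 := by
  have h := usph_map hν (negC i) (f := fun x => x i * x j)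
    ((cm i).mul (cm j)).aestronglyMeasurable
  have e : (fun x : EuclideanSpace ℝ (Fin N) => (negC i x) i * (negC i x) j)
      = fun x => -(x i * x j) := by
    funext x; rw [negC_apply, negC_apply, if_pos rfl, if_neg (Ne.symm hij)]; ring
  rw [e, integral_neg] at h
  linarith

lemma usph_int31 (hν : IsUniformOnSphere ν) {i j : Fin N} (hij : i ≠ j) :
    ∫ x, x i ^ 3 * x j ∂ν = 0 := by
  have h := usph_map hν (negC j) (f := fun x => x i ^ 3 * x j)
    (((cm i).pow_const 3).mul (cm j)).aestronglyMeasurable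
  have e : (fun x : EuclideanSpace ℝ (Fin N) => (negC j x) i ^ 3 * (negC j x) j)
      = fun x => -(x i ^ 3 * x j) := by
    funext x; rw [negC_apply, negC_apply, if_pos rfl, if_neg hij]; ring
  rw [e, integral_neg] at h
  linarith

lemma usph_int13 (hν : IsUniformOnSphere ν) {i j : Fin N} (hij : i ≠ j) :
    ∫ x, x i * x j ^ 3 ∂ν = 0 := by
  have h := usph_map hν (negC i) (f := fun x => x i * x j ^ 3)
    ((cm i).mul ((cm j).pow_const 3)).aestronglyMeasurable
  have e : (fun x : EuclideanSpace ℝ (Fin N) => (negC i x) i * (negC i x) j ^ 3)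
      = fun x => -(x i * x j ^ 3) := by
    funext x; rw [negC_apply, negC_apply, if_pos rfl, if_neg (Ne.symm hij)]; ring
  rw [e, integral_neg] at h
  linarith

-- second moment
lemma usph_sq_exch (hν : IsUniformOnSphere ν) (i j : Fin N) :
    ∫ x, x i ^ 2 ∂ν = ∫ x, x j ^ 2 ∂ν := by
  have h := usph_map hν (swapC i j) (f := fun x => x i ^ 2)
    ((cm i).pow_const 2).aestronglyMeasurable
  have e : (fun x : EuclideanSpace ℝ (Fin N) => (swapC i j x) i ^ 2)
      = fun x => x j ^ 2 := by
    funext x; rw [swapC_apply, Equiv.swap_apply_left]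
  rw [e] at h
  exact h.symm

lemma usph_int2 (hν : IsUniformOnSphere ν) (hN : 0 < N) (i : Fin N) :
    ∫ x, x i ^ 2 ∂ν = 1 / N := by
  haveI := hν.1
  have hint : ∀ j : Fin N, Integrable (fun x : EuclideanSpace ℝ (Fin N) => x j ^ 2) ν :=
    fun j => usph_integrable hν ((cm j).pow_const 2) 1
      (fun x hx => by rw [abs_pow]; exact pow_le_one₀ (abs_nonneg _) (hx j))
  have h1 : ∫ x, ∑ j, x j ^ 2 ∂ν = ∑ j, ∫ x, x j ^ 2 ∂ν :=
    integral_finset_sum _ (fun j _ => hint j)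
  have h2 : ∫ x, ∑ j, x j ^ 2 ∂ν = 1 := by
    rw [integral_congr_ae ((usph_ae hν).mono (fun x hx => hx.2))]
    simp
  have h3 : ∑ j, ∫ x, x j ^ 2 ∂ν = N * ∫ x, x i ^ 2 ∂ν := by
    rw [Finset.sum_congr rfl (fun j _ => usph_sq_exch hν j i)]
    simp [Finset.card_univ, mul_comm]
  have hN' : (N : ℝ) ≠ 0 := Nat.cast_ne_zero.mpr hN.ne'
  field_simp
  linarith [h1, h2, h3]

-- fourth moments
lemma usph_int22_aux (hν : IsUniformOnSphere ν) {i j : Fin N} (hij : i ≠ j) :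
    ∫ x, x i ^ 2 * x j ^ 2 ∂ν = 1 / (N * (N + 2)) ∧
    ∫ x, x i ^ 4 ∂ν = 3 / (N * (N + 2)) := by
  haveI := hν.1
  have hN : 0 < N := i.pos
  -- integrability of degree ≤ 4 monomials
  have hb : ∀ (p q : ℕ) (a b : Fin N), Integrable
      (fun x : EuclideanSpace ℝ (Fin N) => x a ^ p * x b ^ q) ν := by
    intro p q a b
    refine usph_integrable hν (((cm a).pow_const p).mul ((cm b).pow_const q)) 1 ?_
    intro x hx
    rw [abs_mul, abs_pow, abs_pow]
    exact mul_le_one₀ (pow_le_one₀ (abs_nonneg _) (hx a)) (pow_nonneg (abs_nonneg _) q)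
      (pow_le_one₀ (abs_nonneg _) (hx b))
  have h4 : ∀ a : Fin N, Integrable (fun x : EuclideanSpace ℝ (Fin N) => x a ^ 4) ν := by
    intro a
    have := hb 4 0 a a
    simpa using this
  set q : ℝ := ∫ x, x i ^ 4 ∂ν with hq
  set r : ℝ := ∫ x, x i ^ 2 * x j ^ 2 ∂ν with hr
  -- exchange: ∫ x_j^4 = ∫ x_i^4
  have hexch : ∫ x, x j ^ 4 ∂ν = q := by
    have h := usph_map hν (swapC i j) (f := fun x => x i ^ 4)
      ((cm i).pow_const 4).aestronglyMeasurable
    have e : (fun x : EuclideanSpace ℝ (Fin N) => (swapC i j x) i ^ 4)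
        = fun x => x j ^ 4 := by
      funext x; rw [swapC_apply, Equiv.swap_apply_left]
    rw [e] at h
    exact h
  -- rotation identity: q = 3 r
  have hrot : q = 3 * r := by
    have h := usph_map hν (rotC hij) (f := fun x => x i ^ 4)
      ((cm i).pow_const 4).aestronglyMeasurable
    have e : (fun x : EuclideanSpace ℝ (Fin N) => (rotC hij x) i ^ 4)
        = fun x => ((x i + x j) / Real.sqrt 2) ^ 4 := by
      funext x; rw [rotC_apply, rotFun_i hij]
    rw [e] at h
    -- ((a+b)/√2)^4 = (a+b)^4 / 4
    have hs4 : (Real.sqrt 2) ^ 4 = 4 := by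
      have := Real.sq_sqrt (by norm_num : (2:ℝ) ≥ 0)
      nlinarith [this]
    have e2 : (fun x : EuclideanSpace ℝ (Fin N) => ((x i + x j) / Real.sqrt 2) ^ 4)
        = fun x => (1/4) * (x i ^ 4 + (4 * (x i ^ 3 * x j) + (6 * (x i ^ 2 * x j ^ 2)
            + (4 * (x i * x j ^ 3) + x j ^ 4)))) := by
      funext x
      rw [div_pow, hs4]
      ring
    rw [e2] at h
    have I2 := (hb 3 1 i j)
    have I3 := (hb 2 2 i j)
    have I4 := (hb 1 3 i j)
    have e31 : (fun x : EuclideanSpace ℝ (Fin N) => x i ^ 3 * x j ^ 1)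
        = fun x => x i ^ 3 * x j := by funext x; ring
    have e13 : (fun x : EuclideanSpace ℝ (Fin N) => x i ^ 1 * x j ^ 3)
        = fun x => x i * x j ^ 3 := by funext x; ring
    rw [e31] at I2; rw [e13] at I4
    have I2' : Integrable (fun x : EuclideanSpace ℝ (Fin N) =>
        4 * (x i ^ 3 * x j)) ν := I2.const_mul 4
    have I3' : Integrable (fun x : EuclideanSpace ℝ (Fin N) =>
        6 * (x i ^ 2 * x j ^ 2)) ν := I3.const_mul 6
    have I4' : Integrable (fun x : EuclideanSpace ℝ (Fin N) =>
        4 * (x i * x j ^ 3)) ν := I4.const_mul 4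
    have I45 : Integrable (fun x : EuclideanSpace ℝ (Fin N) =>
        4 * (x i * x j ^ 3) + x j ^ 4) ν := I4'.add (h4 j)
    have I345 : Integrable (fun x : EuclideanSpace ℝ (Fin N) =>
        6 * (x i ^ 2 * x j ^ 2) + (4 * (x i * x j ^ 3) + x j ^ 4)) ν := I3'.add I45
    have I2345 : Integrable (fun x : EuclideanSpace ℝ (Fin N) =>
        4 * (x i ^ 3 * x j) + (6 * (x i ^ 2 * x j ^ 2)
          + (4 * (x i * x j ^ 3) + x j ^ 4))) ν := I2'.add I345
    have S4 : ∫ x, (4 * (x i * x j ^ 3) + x j ^ 4) ∂ν = q := by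
      rw [integral_add I4' (h4 j), integral_const_mul, usph_int13 hν hij, hexch]
      ring
    have S3 : ∫ x, (6 * (x i ^ 2 * x j ^ 2) + (4 * (x i * x j ^ 3) + x j ^ 4)) ∂ν
        = 6 * r + q := by
      rw [integral_add I3' I45, integral_const_mul, S4, hr]
    have S2 : ∫ x, (4 * (x i ^ 3 * x j) + (6 * (x i ^ 2 * x j ^ 2)
        + (4 * (x i * x j ^ 3) + x j ^ 4))) ∂ν = 6 * r + q := by
      rw [integral_add I2' I345, integral_const_mul, S3, usph_int31 hν hij]
      ring
    rw [integral_const_mul, integral_add (h4 i) I2345, S2] at h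
    rw [← hq] at h
    linarith
  -- sum identity: q + (N-1) r = 1/N
  have hsum : q + ((N : ℝ) - 1) * r = 1 / N := by
    have hint : ∀ t : Fin N, Integrable
        (fun x : EuclideanSpace ℝ (Fin N) => x i ^ 2 * x t ^ 2) ν := fun t => hb 2 2 i t
    have h1 : ∫ x, ∑ t, x i ^ 2 * x t ^ 2 ∂ν = ∑ t, ∫ x, x i ^ 2 * x t ^ 2 ∂ν :=
      integral_finset_sum _ (fun t _ => hint t)
    have h2 : ∫ x, ∑ t, x i ^ 2 * x t ^ 2 ∂ν = 1 / N := by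
      have e : ∀ᵐ x ∂ν, ∑ t, x i ^ 2 * x t ^ 2 = x i ^ 2 := by
        filter_upwards [usph_ae hν] with x hx
        rw [← Finset.mul_sum, hx.2, mul_one]
      rw [integral_congr_ae e, usph_int2 hν hN i]
    have h3 : ∀ t : Fin N, t ≠ i → ∫ x, x i ^ 2 * x t ^ 2 ∂ν = r := by
      intro t ht
      have h := usph_map hν (swapC t j) (f := fun x => x i ^ 2 * x j ^ 2)
        (((cm i).pow_const 2).mul ((cm j).pow_const 2)).aestronglyMeasurable
      have e : (fun x : EuclideanSpace ℝ (Fin N) => (swapC t j x) i ^ 2 * (swapC t j x) j ^ 2)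
          = fun x => x i ^ 2 * x t ^ 2 := by
        funext x
        rw [swapC_apply, swapC_apply, Equiv.swap_apply_right,
          Equiv.swap_apply_of_ne_of_ne (Ne.symm ht) hij]
      rw [e] at h
      exact h
    have h4' : ∑ t, ∫ x, x i ^ 2 * x t ^ 2 ∂ν = q + ((N : ℝ) - 1) * r := by
      rw [← Finset.add_sum_erase _ _ (Finset.mem_univ i)]
      have e0 : ∫ x, x i ^ 2 * x i ^ 2 ∂ν = q := by
        rw [hq]; congr 1; funext x; ring
      rw [e0]
      congr 1
      rw [Finset.sum_congr rfl (fun t ht => h3 t (Finset.ne_of_mem_erase ht))]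
      rw [Finset.sum_const, Finset.card_erase_of_mem (Finset.mem_univ i), Finset.card_univ]
      simp [Nat.cast_sub (by omega : 1 ≤ N), nsmul_eq_mul]
    rw [h1, h4'] at h2
    exact h2
  have hN' : (N : ℝ) ≠ 0 := Nat.cast_ne_zero.mpr hN.ne'
  have hN2 : (N : ℝ) + 2 ≠ 0 := by positivity
  rw [hrot] at hsum
  have hrval : r = 1 / (N * (N + 2)) := by
    field_simp at hsum ⊢
    linarith
  refine ⟨hrval, ?_⟩
  show q = 3 / ((N : ℝ) * (N + 2))
  rw [hrot, hrval]
  field_simp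

lemma usph_int22 (hν : IsUniformOnSphere ν) {i j : Fin N} (hij : i ≠ j) :
    ∫ x, x i ^ 2 * x j ^ 2 ∂ν = 1 / (N * (N + 2)) := (usph_int22_aux hν hij).1

lemma usph_int4 (hν : IsUniformOnSphere ν) {i j : Fin N} (hij : i ≠ j) :
    ∫ x, x i ^ 4 ∂ν = 3 / (N * (N + 2)) := (usph_int22_aux hν hij).2



-- generic helpers for splitting integrals of sums
section addHelpers
variable {α : Type*} [MeasurableSpace α] {P : Measure α}

lemma integral_add6 {f1 f2 f3 f4 f5 f6 : α → ℝ}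
    (h1 : Integrable f1 P) (h2 : Integrable f2 P) (h3 : Integrable f3 P)
    (h4 : Integrable f4 P) (h5 : Integrable f5 P) (h6 : Integrable f6 P) :
    ∫ x, (f1 x + f2 x + f3 x + f4 x + f5 x + f6 x) ∂P
      = ∫ x, f1 x ∂P + ∫ x, f2 x ∂P + ∫ x, f3 x ∂P + ∫ x, f4 x ∂P
        + ∫ x, f5 x ∂P + ∫ x, f6 x ∂P := by
  have a12 : Integrable (fun x => f1 x + f2 x) P := h1.add h2
  have a13 : Integrable (fun x => f1 x + f2 x + f3 x) P := a12.add h3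
  have a14 : Integrable (fun x => f1 x + f2 x + f3 x + f4 x) P := a13.add h4
  have a15 : Integrable (fun x => f1 x + f2 x + f3 x + f4 x + f5 x) P := a14.add h5
  rw [integral_add a15 h6, integral_add a14 h5, integral_add a13 h4,
    integral_add a12 h3, integral_add h1 h2]

lemma integral_add9 {f1 f2 f3 f4 f5 f6 f7 f8 f9 : α → ℝ}
    (h1 : Integrable f1 P) (h2 : Integrable f2 P) (h3 : Integrable f3 P)
    (h4 : Integrable f4 P) (h5 : Integrable f5 P) (h6 : Integrable f6 P)
    (h7 : Integrable f7 P) (h8 : Integrable f8 P) (h9 : Integrable f9 P) :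
    ∫ x, (f1 x + f2 x + f3 x + f4 x + f5 x + f6 x + f7 x + f8 x + f9 x) ∂P
      = ∫ x, f1 x ∂P + ∫ x, f2 x ∂P + ∫ x, f3 x ∂P + ∫ x, f4 x ∂P
        + ∫ x, f5 x ∂P + ∫ x, f6 x ∂P + ∫ x, f7 x ∂P + ∫ x, f8 x ∂P
        + ∫ x, f9 x ∂P := by
  have a12 : Integrable (fun x => f1 x + f2 x) P := h1.add h2
  have a13 : Integrable (fun x => f1 x + f2 x + f3 x) P := a12.add h3
  have a14 : Integrable (fun x => f1 x + f2 x + f3 x + f4 x) P := a13.add h4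
  have a15 : Integrable (fun x => f1 x + f2 x + f3 x + f4 x + f5 x) P := a14.add h5
  have a16 : Integrable (fun x => f1 x + f2 x + f3 x + f4 x + f5 x + f6 x) P := a15.add h6
  have a17 : Integrable (fun x => f1 x + f2 x + f3 x + f4 x + f5 x + f6 x + f7 x) P :=
    a16.add h7
  have a18 : Integrable
      (fun x => f1 x + f2 x + f3 x + f4 x + f5 x + f6 x + f7 x + f8 x) P := a17.add h8
  rw [integral_add a18 h9, integral_add a17 h8, integral_add a16 h7, integral_add a15 h6,
    integral_add a14 h5, integral_add a13 h4, integral_add a12 h3, integral_add h1 h2]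

end addHelpers

-- bound helpers
lemma bnd_mul {a b : ℝ} (ha : |a| ≤ 1) (hb : |b| ≤ 1) : |a * b| ≤ 1 := by
  rw [abs_mul]
  exact mul_le_one₀ ha (abs_nonneg b) hb

lemma bnd_pow {a : ℝ} (ha : |a| ≤ 1) (p : ℕ) : |a ^ p| ≤ 1 := by
  rw [abs_pow]
  exact pow_le_one₀ (abs_nonneg a) ha

lemma bnd_mul_const {a c C : ℝ} (ha : |a| ≤ 1) (hc : |c| ≤ C) : |a * c| ≤ C := by
  rw [abs_mul]
  calc |a| * |c| ≤ 1 * C := mul_le_mul ha hc (abs_nonneg c) zero_le_one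
    _ = C := one_mul C

lemma bnd_mul2 {a b A B : ℝ} (ha : |a| ≤ A) (hb : |b| ≤ B) : |a * b| ≤ A * B := by
  rw [abs_mul]
  exact mul_le_mul ha hb (abs_nonneg _) ((abs_nonneg a).trans ha)

lemma aux_f {x : ℝ} (hx : 2 ≤ x) (k : ℕ) :
    2 * k / (x * (x + 2)) + (k : ℝ) ^ 2 / (x * (x + 2)) - k ^ 2 / x ^ 2 ≤ 2 * k / x ^ 2 := by
  have hx0 : (0:ℝ) < x := by linarith
  have h1 : (0:ℝ) < x ^ 2 * (x + 2) := by positivity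
  have key : 2 * k / (x * (x + 2)) + (k : ℝ) ^ 2 / (x * (x + 2)) - k ^ 2 / x ^ 2 - 2 * k / x ^ 2
      = -((2 * (k:ℝ) ^ 2 + 4 * k) / (x ^ 2 * (x + 2))) := by
    field_simp
    ring
  have h2 : (0:ℝ) ≤ (2 * (k:ℝ) ^ 2 + 4 * k) / (x ^ 2 * (x + 2)) := by positivity
  linarith [key]

set_option maxHeartbeats 2000000 in
/-- The variance bound in the proof of the paper's Core Lemma: for independent `u`
uniform on `S^{m−1}` and `v` uniform on `S^{n−1}` (modelled by the product measure
`μ.prod ν`), fixed `σ_ℓ` with `|σ_ℓ| ≥ σ_min > 0` and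
`1/(σ_min² m n) ≤ 0.01 (1/m² + 1/n²)`, the random variable
`δ = Σ_{ℓ≤k} (v_ℓ² + u_ℓ² + u_ℓ v_ℓ/σ_ℓ)` satisfies
`Var[δ] ≤ 2.01 k (1/m² + 1/n²)`. -/
theorem core_lemma_variance_bound
    {m n : ℕ} (hm : 2 ≤ m) (hn : 2 ≤ n) (k : ℕ) (hk : k ≤ min m n)
    (μ : Measure (EuclideanSpace ℝ (Fin m))) (ν : Measure (EuclideanSpace ℝ (Fin n)))
    (hμ : IsUniformOnSphere μ) (hν : IsUniformOnSphere ν)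
    (σ : Fin k → ℝ) (σmin : ℝ) (hσmin : 0 < σmin)
    (hσ : ∀ ℓ, σmin ≤ |σ ℓ|)
    (hsmall : 1 / (σmin ^ 2 * m * n) ≤ 0.01 * (1 / (m : ℝ) ^ 2 + 1 / (n : ℝ) ^ 2)) :
    ProbabilityTheory.variance
      (fun p => ∑ ℓ : Fin k,
        ((p.2 (Fin.castLE (hk.trans (min_le_right m n)) ℓ)) ^ 2 +
         (p.1 (Fin.castLE (hk.trans (min_le_left m n)) ℓ)) ^ 2 +
         (p.1 (Fin.castLE (hk.trans (min_le_left m n)) ℓ)) *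
           (p.2 (Fin.castLE (hk.trans (min_le_right m n)) ℓ)) / σ ℓ))
      (μ.prod ν)
    ≤ 2.01 * k * (1 / (m : ℝ) ^ 2 + 1 / (n : ℝ) ^ 2) := by

  haveI := hμ.1
  haveI := hν.1
  set I : Fin k → Fin m := fun ℓ => Fin.castLE (hk.trans (min_le_left m n)) ℓ with hI
  set J : Fin k → Fin n := fun ℓ => Fin.castLE (hk.trans (min_le_right m n)) ℓ with hJ
  have Iinj : ∀ {ℓ ℓ' : Fin k}, ℓ ≠ ℓ' → I ℓ ≠ I ℓ' :=
    fun h hc => h (Fin.castLE_injective _ hc)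
  have Jinj : ∀ {ℓ ℓ' : Fin k}, ℓ ≠ ℓ' → J ℓ ≠ J ℓ' :=
    fun h hc => h (Fin.castLE_injective _ hc)
  set P := μ.prod ν with hP
  set e : Fin k → (EuclideanSpace ℝ (Fin m) × EuclideanSpace ℝ (Fin n)) → ℝ :=
    fun ℓ p => (p.2 (J ℓ)) ^ 2 + (p.1 (I ℓ)) ^ 2 + (p.1 (I ℓ)) * (p.2 (J ℓ)) / σ ℓ with he
  set X : (EuclideanSpace ℝ (Fin m) × EuclideanSpace ℝ (Fin n)) → ℝ :=
    fun p => ∑ ℓ : Fin k, e ℓ p with hX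
  -- a.e. coordinate bounds on the product
  have aeP : ∀ᵐ p ∂P, (∀ i, |p.1 i| ≤ 1) ∧ (∀ i', |p.2 i'| ≤ 1) := by
    have hs : P ((Metric.sphere (0 : EuclideanSpace ℝ (Fin m)) 1) ×ˢ
        (Metric.sphere (0 : EuclideanSpace ℝ (Fin n)) 1)) = 1 := by
      rw [hP, Measure.prod_prod, hμ.2.1, hν.2.1, mul_one]
    have hms : MeasurableSet ((Metric.sphere (0 : EuclideanSpace ℝ (Fin m)) 1) ×ˢ
        (Metric.sphere (0 : EuclideanSpace ℝ (Fin n)) 1)) :=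
      Metric.isClosed_sphere.measurableSet.prod Metric.isClosed_sphere.measurableSet
    have hc : P ((Metric.sphere (0 : EuclideanSpace ℝ (Fin m)) 1) ×ˢ
        (Metric.sphere (0 : EuclideanSpace ℝ (Fin n)) 1))ᶜ = 0 :=
      (prob_compl_eq_zero_iff hms).mpr hs
    have hae : ∀ᵐ p ∂P, p ∈ ((Metric.sphere (0 : EuclideanSpace ℝ (Fin m)) 1) ×ˢ
        (Metric.sphere (0 : EuclideanSpace ℝ (Fin n)) 1)) := by
      rw [ae_iff]
      convert hc using 2
      rfl
    filter_upwards [hae] with p hp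
    rcases hp with ⟨h1, h2⟩
    constructor
    · exact (norm_one_props p.1 (by simpa [Metric.mem_sphere, dist_zero_right] using h1)).1
    · exact (norm_one_props p.2 (by simpa [Metric.mem_sphere, dist_zero_right] using h2)).1
  -- integrability helper on the product
  have intP : ∀ (f : (EuclideanSpace ℝ (Fin m) × EuclideanSpace ℝ (Fin n)) → ℝ),
      Measurable f → ∀ C : ℝ,
      (∀ p : EuclideanSpace ℝ (Fin m) × EuclideanSpace ℝ (Fin n),
        (∀ i, |p.1 i| ≤ 1) → (∀ i', |p.2 i'| ≤ 1) → |f p| ≤ C) → Integrable f P := by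
    intro f hf C hb
    refine Integrable.mono' (integrable_const C) hf.aestronglyMeasurable ?_
    filter_upwards [aeP] with p hp
    simpa [Real.norm_eq_abs] using hb p hp.1 hp.2
  -- measurability of coordinates
  have mu : ∀ a : Fin m, Measurable
      (fun p : EuclideanSpace ℝ (Fin m) × EuclideanSpace ℝ (Fin n) => p.1 a) :=
    fun a => (cm a).comp measurable_fst
  have mv : ∀ b : Fin n, Measurable
      (fun p : EuclideanSpace ℝ (Fin m) × EuclideanSpace ℝ (Fin n) => p.2 b) :=
    fun b => (cm b).comp measurable_snd
  have hσinv : ∀ ℓ, |(σ ℓ)⁻¹| ≤ σmin⁻¹ := by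
    intro ℓ
    rw [abs_inv]
    exact inv_anti₀ hσmin (hσ ℓ)
  have hσne : ∀ ℓ, σ ℓ ≠ 0 := by
    intro ℓ
    intro h
    have := hσ ℓ
    rw [h, abs_zero] at this
    linarith
  -- measurability and integrability of e
  have me : ∀ ℓ, Measurable (e ℓ) := fun ℓ =>
    (((mv (J ℓ)).pow_const 2).add ((mu (I ℓ)).pow_const 2)).add
      (((mu (I ℓ)).mul (mv (J ℓ))).div_const (σ ℓ))
  have mX : Measurable X := Finset.measurable_sum _ (fun ℓ _ => me ℓ)
  have hsm0 : (0:ℝ) ≤ σmin⁻¹ := by positivity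
  have ebnd : ∀ (ℓ : Fin k) (p : EuclideanSpace ℝ (Fin m) × EuclideanSpace ℝ (Fin n)),
      (∀ i, |p.1 i| ≤ 1) → (∀ i', |p.2 i'| ≤ 1) → |e ℓ p| ≤ 2 + σmin⁻¹ := by
    intro ℓ p h1 h2
    have hv : |p.2 (J ℓ) ^ 2| ≤ 1 := bnd_pow (h2 _) 2
    have hu : |p.1 (I ℓ) ^ 2| ≤ 1 := bnd_pow (h1 _) 2
    have huv : |p.1 (I ℓ) * p.2 (J ℓ) / σ ℓ| ≤ σmin⁻¹ := by
      rw [div_eq_mul_inv]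
      exact bnd_mul_const (bnd_mul (h1 _) (h2 _)) (hσinv ℓ)
    calc |e ℓ p| ≤ |p.2 (J ℓ) ^ 2 + p.1 (I ℓ) ^ 2| + |p.1 (I ℓ) * p.2 (J ℓ) / σ ℓ| :=
          abs_add_le _ _
      _ ≤ (|p.2 (J ℓ) ^ 2| + |p.1 (I ℓ) ^ 2|) + σmin⁻¹ := by
          gcongr; exact abs_add_le _ _
      _ ≤ 2 + σmin⁻¹ := by linarith
  have inte : ∀ ℓ, Integrable (e ℓ) P :=
    fun ℓ => intP _ (me ℓ) (2 + σmin⁻¹) (ebnd ℓ)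
  have intee : ∀ ℓ ℓ', Integrable (fun p => e ℓ p * e ℓ' p) P := by
    intro ℓ ℓ'
    refine intP _ ((me ℓ).mul (me ℓ')) ((2 + σmin⁻¹) ^ 2) ?_
    intro p h1 h2
    rw [abs_mul, sq]
    exact mul_le_mul (ebnd ℓ p h1 h2) (ebnd ℓ' p h1 h2) (abs_nonneg _) (by linarith)
  -- Memℒp 2
  have hmem : MemLp X 2 P := by
    refine MemLp.of_bound mX.aestronglyMeasurable ((k : ℝ) * (2 + σmin⁻¹)) ?_
    filter_upwards [aeP] with p hp
    rw [Real.norm_eq_abs, hX]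
    calc |∑ ℓ, e ℓ p| ≤ ∑ ℓ, |e ℓ p| := Finset.abs_sum_le_sum_abs _ _
      _ ≤ ∑ _ℓ : Fin k, (2 + σmin⁻¹) :=
          Finset.sum_le_sum (fun ℓ _ => ebnd ℓ p hp.1 hp.2)
      _ = (k : ℝ) * (2 + σmin⁻¹) := by
          rw [Finset.sum_const, Finset.card_univ, Fintype.card_fin, nsmul_eq_mul]
  have hm0 : (0:ℝ) < m := by positivity
  have hn0 : (0:ℝ) < n := by positivity
  have hmR : (2:ℝ) ≤ m := by exact_mod_cast hm
  have hnR : (2:ℝ) ≤ n := by exact_mod_cast hn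
  -- the mean
  have mean_term : ∀ ℓ, ∫ p, e ℓ p ∂P = 1 / n + 1 / m := by
    intro ℓ
    have edec : e ℓ = fun p => (p.2 (J ℓ)) ^ 2 + (p.1 (I ℓ)) ^ 2
        + p.1 (I ℓ) * (p.2 (J ℓ) / σ ℓ) := by
      funext p
      rw [he]
      ring
    have i1 : Integrable (fun p : EuclideanSpace ℝ (Fin m) × EuclideanSpace ℝ (Fin n) =>
        (p.2 (J ℓ)) ^ 2) P := intP _ ((mv (J ℓ)).pow_const 2) 1 (fun p h1 h2 => bnd_pow (h2 _) 2)
    have i2 : Integrable (fun p : EuclideanSpace ℝ (Fin m) × EuclideanSpace ℝ (Fin n) =>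
        (p.1 (I ℓ)) ^ 2) P := intP _ ((mu (I ℓ)).pow_const 2) 1 (fun p h1 h2 => bnd_pow (h1 _) 2)
    have i3 : Integrable (fun p : EuclideanSpace ℝ (Fin m) × EuclideanSpace ℝ (Fin n) =>
        p.1 (I ℓ) * (p.2 (J ℓ) / σ ℓ)) P := by
      refine intP _ ((mu (I ℓ)).mul ((mv (J ℓ)).div_const (σ ℓ))) σmin⁻¹ ?_
      intro p h1 h2
      have hq : |p.2 (J ℓ) / σ ℓ| ≤ σmin⁻¹ := by
        rw [div_eq_mul_inv]; exact bnd_mul_const (h2 _) (hσinv ℓ)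
      exact bnd_mul_const (h1 _) hq
    have i12 : Integrable (fun p : EuclideanSpace ℝ (Fin m) × EuclideanSpace ℝ (Fin n) =>
        (p.2 (J ℓ)) ^ 2 + (p.1 (I ℓ)) ^ 2) P := i1.add i2
    rw [edec, integral_add i12 i3, integral_add i1 i2]
    have v1 : ∫ p, (p.2 (J ℓ)) ^ 2 ∂P = 1 / n := by
      have h := integral_fun_snd (μ := μ) (ν := ν) (fun y => (y (J ℓ)) ^ 2)
      rw [hP]
      rw [h, probReal_univ, one_smul, usph_int2 hν (by omega) (J ℓ)]
    have u1 : ∫ p, (p.1 (I ℓ)) ^ 2 ∂P = 1 / m := by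
      have h := integral_fun_fst (μ := μ) (ν := ν) (fun x => (x (I ℓ)) ^ 2)
      rw [hP]
      rw [h, probReal_univ, one_smul, usph_int2 hμ (by omega) (I ℓ)]
    have w1 : ∫ p, p.1 (I ℓ) * (p.2 (J ℓ) / σ ℓ) ∂P = 0 := by
      have hw := integral_prod_mul (μ := μ) (ν := ν)
        (fun x : EuclideanSpace ℝ (Fin m) => x (I ℓ))
        (fun y : EuclideanSpace ℝ (Fin n) => y (J ℓ) / σ ℓ)
      rw [usph_int1 hμ (I ℓ), zero_mul] at hw
      rw [hP]
      exact hw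
    rw [v1, u1, w1, add_zero]
  have mean : ∫ p, X p ∂P = k * (1 / n + 1 / m) := by
    rw [hX, integral_finset_sum _ (fun ℓ _ => inte ℓ),
      Finset.sum_congr rfl (fun ℓ _ => mean_term ℓ), Finset.sum_const, Finset.card_univ,
      Fintype.card_fin, nsmul_eq_mul]
  set c1 : ℝ := 1 / (n * (n + 2)) + 1 / (m * (m + 2)) + 2 / (m * n) with hc1
  set ex : Fin k → ℝ :=
    fun ℓ => 2 / (n * (n + 2)) + 2 / (m * (m + 2)) + 1 / (σ ℓ ^ 2 * m * n) with hex
  have hσsq : ∀ ℓ, σmin ^ 2 ≤ σ ℓ ^ 2 := by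
    intro ℓ
    nlinarith [hσ ℓ, abs_nonneg (σ ℓ), sq_abs (σ ℓ)]
  have hσinv2 : ∀ ℓ, |((σ ℓ) ^ 2)⁻¹| ≤ (σmin ^ 2)⁻¹ := by
    intro ℓ
    rw [abs_of_nonneg (by positivity : (0:ℝ) ≤ ((σ ℓ) ^ 2)⁻¹)]
    exact inv_anti₀ (by positivity) (hσsq ℓ)
  -- diagonal pair integral
  have diag : ∀ ℓ, ∫ p, e ℓ p * e ℓ p ∂P = c1 + ex ℓ := by
    intro ℓ
    haveI : Nontrivial (Fin m) := Fin.nontrivial_iff_two_le.mpr hm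
    haveI : Nontrivial (Fin n) := Fin.nontrivial_iff_two_le.mpr hn
    obtain ⟨a', ha'⟩ := exists_ne (I ℓ)
    obtain ⟨b', hb'⟩ := exists_ne (J ℓ)
    have edec2 : (fun p => e ℓ p * e ℓ p)
        = fun p : EuclideanSpace ℝ (Fin m) × EuclideanSpace ℝ (Fin n) =>
          (p.2 (J ℓ)) ^ 4 + (p.1 (I ℓ)) ^ 4
          + (p.1 (I ℓ)) ^ 2 * ((p.2 (J ℓ)) ^ 2 * ((σ ℓ) ^ 2)⁻¹)
          + (2 * (p.1 (I ℓ)) ^ 2) * (p.2 (J ℓ)) ^ 2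
          + (2 * (p.1 (I ℓ) * (σ ℓ)⁻¹)) * (p.2 (J ℓ)) ^ 3
          + (2 * ((p.1 (I ℓ)) ^ 3 * (σ ℓ)⁻¹)) * (p.2 (J ℓ)) := by
      funext p
      rw [he]
      ring
    have j1 : Integrable (fun p : EuclideanSpace ℝ (Fin m) × EuclideanSpace ℝ (Fin n) =>
        (p.2 (J ℓ)) ^ 4) P := intP _ ((mv (J ℓ)).pow_const 4) 1 (fun p h1 h2 => bnd_pow (h2 _) 4)
    have j2 : Integrable (fun p : EuclideanSpace ℝ (Fin m) × EuclideanSpace ℝ (Fin n) =>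
        (p.1 (I ℓ)) ^ 4) P := intP _ ((mu (I ℓ)).pow_const 4) 1 (fun p h1 h2 => bnd_pow (h1 _) 4)
    have j3 : Integrable (fun p : EuclideanSpace ℝ (Fin m) × EuclideanSpace ℝ (Fin n) =>
        (p.1 (I ℓ)) ^ 2 * ((p.2 (J ℓ)) ^ 2 * ((σ ℓ) ^ 2)⁻¹)) P := by
      refine intP _ (((mu (I ℓ)).pow_const 2).mul
        (((mv (J ℓ)).pow_const 2).mul_const _)) ((σmin ^ 2)⁻¹) ?_
      intro p h1 h2
      exact bnd_mul_const (bnd_pow (h1 _) 2) (bnd_mul_const (bnd_pow (h2 _) 2) (hσinv2 ℓ))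
    have j4 : Integrable (fun p : EuclideanSpace ℝ (Fin m) × EuclideanSpace ℝ (Fin n) =>
        (2 * (p.1 (I ℓ)) ^ 2) * (p.2 (J ℓ)) ^ 2) P := by
      refine intP _ ((((mu (I ℓ)).pow_const 2).const_mul 2).mul
        ((mv (J ℓ)).pow_const 2)) ((2 * 1) * 1) ?_
      intro p h1 h2
      exact bnd_mul2 (bnd_mul2 (by norm_num) (bnd_pow (h1 _) 2)) (bnd_pow (h2 _) 2)
    have j5 : Integrable (fun p : EuclideanSpace ℝ (Fin m) × EuclideanSpace ℝ (Fin n) =>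
        (2 * (p.1 (I ℓ) * (σ ℓ)⁻¹)) * (p.2 (J ℓ)) ^ 3) P := by
      refine intP _ ((((mu (I ℓ)).mul_const _).const_mul 2).mul
        ((mv (J ℓ)).pow_const 3)) ((2 * (1 * σmin⁻¹)) * 1) ?_
      intro p h1 h2
      exact bnd_mul2 (bnd_mul2 (by norm_num) (bnd_mul2 (h1 _) (hσinv ℓ))) (bnd_pow (h2 _) 3)
    have j6 : Integrable (fun p : EuclideanSpace ℝ (Fin m) × EuclideanSpace ℝ (Fin n) =>
        (2 * ((p.1 (I ℓ)) ^ 3 * (σ ℓ)⁻¹)) * (p.2 (J ℓ))) P := by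
      refine intP _ (((((mu (I ℓ)).pow_const 3).mul_const _).const_mul 2).mul
        (mv (J ℓ))) ((2 * (1 * σmin⁻¹)) * 1) ?_
      intro p h1 h2
      exact bnd_mul2 (bnd_mul2 (by norm_num) (bnd_mul2 (bnd_pow (h1 _) 3) (hσinv ℓ))) (h2 _)
    have T1 : ∫ p, (p.2 (J ℓ)) ^ 4 ∂P = 3 / (n * (n + 2)) := by
      have h := integral_fun_snd (μ := μ) (ν := ν) (fun y => (y (J ℓ)) ^ 4)
      rw [hP]
      rw [h, probReal_univ, one_smul, usph_int4 hν (Ne.symm hb')]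
    have T2 : ∫ p, (p.1 (I ℓ)) ^ 4 ∂P = 3 / (m * (m + 2)) := by
      have h := integral_fun_fst (μ := μ) (ν := ν) (fun x => (x (I ℓ)) ^ 4)
      rw [hP]
      rw [h, probReal_univ, one_smul, usph_int4 hμ (Ne.symm ha')]
    have T3 : ∫ p, (p.1 (I ℓ)) ^ 2 * ((p.2 (J ℓ)) ^ 2 * ((σ ℓ) ^ 2)⁻¹) ∂P
        = (1 / (m:ℝ)) * ((1 / (n:ℝ)) * ((σ ℓ) ^ 2)⁻¹) := by
      have hw := integral_prod_mul (μ := μ) (ν := ν)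
        (fun x : EuclideanSpace ℝ (Fin m) => (x (I ℓ)) ^ 2)
        (fun y : EuclideanSpace ℝ (Fin n) => (y (J ℓ)) ^ 2 * ((σ ℓ) ^ 2)⁻¹)
      rw [integral_mul_const, usph_int2 hμ (by omega) (I ℓ),
        usph_int2 hν (by omega) (J ℓ)] at hw
      rw [hP]
      exact hw
    have T4 : ∫ p, (2 * (p.1 (I ℓ)) ^ 2) * (p.2 (J ℓ)) ^ 2 ∂P
        = (2 * (1 / (m:ℝ))) * (1 / (n:ℝ)) := by
      have hw := integral_prod_mul (μ := μ) (ν := ν)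
        (fun x : EuclideanSpace ℝ (Fin m) => 2 * (x (I ℓ)) ^ 2)
        (fun y : EuclideanSpace ℝ (Fin n) => (y (J ℓ)) ^ 2)
      rw [integral_const_mul, usph_int2 hμ (by omega) (I ℓ),
        usph_int2 hν (by omega) (J ℓ)] at hw
      rw [hP]
      exact hw
    have T5 : ∫ p, (2 * (p.1 (I ℓ) * (σ ℓ)⁻¹)) * (p.2 (J ℓ)) ^ 3 ∂P = 0 := by
      have hw := integral_prod_mul (μ := μ) (ν := ν)
        (fun x : EuclideanSpace ℝ (Fin m) => 2 * (x (I ℓ) * (σ ℓ)⁻¹))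
        (fun y : EuclideanSpace ℝ (Fin n) => (y (J ℓ)) ^ 3)
      rw [integral_const_mul, integral_mul_const, usph_int1 hμ (I ℓ)] at hw
      simp only [zero_mul, mul_zero] at hw
      rw [hP]
      exact hw
    have T6 : ∫ p, (2 * ((p.1 (I ℓ)) ^ 3 * (σ ℓ)⁻¹)) * (p.2 (J ℓ)) ∂P = 0 := by
      have hw := integral_prod_mul (μ := μ) (ν := ν)
        (fun x : EuclideanSpace ℝ (Fin m) => 2 * ((x (I ℓ)) ^ 3 * (σ ℓ)⁻¹))
        (fun y : EuclideanSpace ℝ (Fin n) => y (J ℓ))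
      rw [usph_int1 hν (J ℓ), mul_zero] at hw
      rw [hP]
      exact hw
    rw [edec2, integral_add6 j1 j2 j3 j4 j5 j6, T1, T2, T3, T4, T5, T6, hc1, hex]
    ring
  -- off-diagonal pair integral
  have offdiag : ∀ ℓ ℓ' : Fin k, ℓ ≠ ℓ' → ∫ p, e ℓ p * e ℓ' p ∂P = c1 := by
    intro ℓ ℓ' hll
    have edec2 : (fun p => e ℓ p * e ℓ' p)
        = fun p : EuclideanSpace ℝ (Fin m) × EuclideanSpace ℝ (Fin n) =>
          (p.2 (J ℓ)) ^ 2 * (p.2 (J ℓ')) ^ 2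
          + (p.1 (I ℓ')) ^ 2 * (p.2 (J ℓ)) ^ 2
          + (p.1 (I ℓ')) * (((p.2 (J ℓ)) ^ 2 * (p.2 (J ℓ'))) * (σ ℓ')⁻¹)
          + (p.1 (I ℓ)) ^ 2 * (p.2 (J ℓ')) ^ 2
          + (p.1 (I ℓ)) ^ 2 * (p.1 (I ℓ')) ^ 2
          + (((p.1 (I ℓ)) ^ 2 * (p.1 (I ℓ'))) * (σ ℓ')⁻¹) * (p.2 (J ℓ'))
          + (p.1 (I ℓ)) * (((p.2 (J ℓ)) * (p.2 (J ℓ')) ^ 2) * (σ ℓ)⁻¹)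
          + (((p.1 (I ℓ)) * (p.1 (I ℓ')) ^ 2) * (σ ℓ)⁻¹) * (p.2 (J ℓ))
          + (((p.1 (I ℓ)) * (p.1 (I ℓ'))) * ((σ ℓ)⁻¹ * (σ ℓ')⁻¹))
              * ((p.2 (J ℓ)) * (p.2 (J ℓ'))) := by
      funext p
      rw [he]
      ring
    have j1 : Integrable (fun p : EuclideanSpace ℝ (Fin m) × EuclideanSpace ℝ (Fin n) =>
        (p.2 (J ℓ)) ^ 2 * (p.2 (J ℓ')) ^ 2) P :=
      intP _ (((mv (J ℓ)).pow_const 2).mul ((mv (J ℓ')).pow_const 2)) 1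
        (fun p h1 h2 => bnd_mul (bnd_pow (h2 _) 2) (bnd_pow (h2 _) 2))
    have j2 : Integrable (fun p : EuclideanSpace ℝ (Fin m) × EuclideanSpace ℝ (Fin n) =>
        (p.1 (I ℓ')) ^ 2 * (p.2 (J ℓ)) ^ 2) P :=
      intP _ (((mu (I ℓ')).pow_const 2).mul ((mv (J ℓ)).pow_const 2)) 1
        (fun p h1 h2 => bnd_mul (bnd_pow (h1 _) 2) (bnd_pow (h2 _) 2))
    have j3 : Integrable (fun p : EuclideanSpace ℝ (Fin m) × EuclideanSpace ℝ (Fin n) =>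
        (p.1 (I ℓ')) * (((p.2 (J ℓ)) ^ 2 * (p.2 (J ℓ'))) * (σ ℓ')⁻¹)) P := by
      refine intP _ ((mu (I ℓ')).mul ((((mv (J ℓ)).pow_const 2).mul
        (mv (J ℓ'))).mul_const _)) σmin⁻¹ ?_
      intro p h1 h2
      exact bnd_mul_const (h1 _)
        (bnd_mul_const (bnd_mul (bnd_pow (h2 _) 2) (h2 _)) (hσinv ℓ'))
    have j4 : Integrable (fun p : EuclideanSpace ℝ (Fin m) × EuclideanSpace ℝ (Fin n) =>
        (p.1 (I ℓ)) ^ 2 * (p.2 (J ℓ')) ^ 2) P :=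
      intP _ (((mu (I ℓ)).pow_const 2).mul ((mv (J ℓ')).pow_const 2)) 1
        (fun p h1 h2 => bnd_mul (bnd_pow (h1 _) 2) (bnd_pow (h2 _) 2))
    have j5 : Integrable (fun p : EuclideanSpace ℝ (Fin m) × EuclideanSpace ℝ (Fin n) =>
        (p.1 (I ℓ)) ^ 2 * (p.1 (I ℓ')) ^ 2) P :=
      intP _ (((mu (I ℓ)).pow_const 2).mul ((mu (I ℓ')).pow_const 2)) 1
        (fun p h1 h2 => bnd_mul (bnd_pow (h1 _) 2) (bnd_pow (h1 _) 2))
    have j6 : Integrable (fun p : EuclideanSpace ℝ (Fin m) × EuclideanSpace ℝ (Fin n) =>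
        (((p.1 (I ℓ)) ^ 2 * (p.1 (I ℓ'))) * (σ ℓ')⁻¹) * (p.2 (J ℓ'))) P := by
      refine intP _ (((((mu (I ℓ)).pow_const 2).mul (mu (I ℓ'))).mul_const _).mul
        (mv (J ℓ'))) (σmin⁻¹ * 1) ?_
      intro p h1 h2
      exact bnd_mul2 (bnd_mul_const (bnd_mul (bnd_pow (h1 _) 2) (h1 _)) (hσinv ℓ')) (h2 _)
    have j7 : Integrable (fun p : EuclideanSpace ℝ (Fin m) × EuclideanSpace ℝ (Fin n) =>
        (p.1 (I ℓ)) * (((p.2 (J ℓ)) * (p.2 (J ℓ')) ^ 2) * (σ ℓ)⁻¹)) P := by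
      refine intP _ ((mu (I ℓ)).mul (((mv (J ℓ)).mul
        ((mv (J ℓ')).pow_const 2)).mul_const _)) σmin⁻¹ ?_
      intro p h1 h2
      exact bnd_mul_const (h1 _)
        (bnd_mul_const (bnd_mul (h2 _) (bnd_pow (h2 _) 2)) (hσinv ℓ))
    have j8 : Integrable (fun p : EuclideanSpace ℝ (Fin m) × EuclideanSpace ℝ (Fin n) =>
        (((p.1 (I ℓ)) * (p.1 (I ℓ')) ^ 2) * (σ ℓ)⁻¹) * (p.2 (J ℓ))) P := by
      refine intP _ ((((mu (I ℓ)).mul ((mu (I ℓ')).pow_const 2)).mul_const _).mul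
        (mv (J ℓ))) (σmin⁻¹ * 1) ?_
      intro p h1 h2
      exact bnd_mul2 (bnd_mul_const (bnd_mul (h1 _) (bnd_pow (h1 _) 2)) (hσinv ℓ)) (h2 _)
    have j9 : Integrable (fun p : EuclideanSpace ℝ (Fin m) × EuclideanSpace ℝ (Fin n) =>
        (((p.1 (I ℓ)) * (p.1 (I ℓ'))) * ((σ ℓ)⁻¹ * (σ ℓ')⁻¹))
          * ((p.2 (J ℓ)) * (p.2 (J ℓ')))) P := by
      refine intP _ ((((mu (I ℓ)).mul (mu (I ℓ'))).mul_const _).mul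
        ((mv (J ℓ)).mul (mv (J ℓ')))) ((σmin⁻¹ * σmin⁻¹) * 1) ?_
      intro p h1 h2
      exact bnd_mul2 (bnd_mul_const (bnd_mul (h1 _) (h1 _))
        (bnd_mul2 (hσinv ℓ) (hσinv ℓ'))) (bnd_mul (h2 _) (h2 _))
    have T1 : ∫ p, (p.2 (J ℓ)) ^ 2 * (p.2 (J ℓ')) ^ 2 ∂P = 1 / ((n:ℝ) * (n + 2)) := by
      have h := integral_fun_snd (μ := μ) (ν := ν)
        (fun y => (y (J ℓ)) ^ 2 * (y (J ℓ')) ^ 2)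
      rw [hP]
      rw [h, probReal_univ, one_smul, usph_int22 hν (Jinj hll)]
    have T5 : ∫ p, (p.1 (I ℓ)) ^ 2 * (p.1 (I ℓ')) ^ 2 ∂P = 1 / ((m:ℝ) * (m + 2)) := by
      have h := integral_fun_fst (μ := μ) (ν := ν)
        (fun x => (x (I ℓ)) ^ 2 * (x (I ℓ')) ^ 2)
      rw [hP]
      rw [h, probReal_univ, one_smul, usph_int22 hμ (Iinj hll)]
    have T2 : ∫ p, (p.1 (I ℓ')) ^ 2 * (p.2 (J ℓ)) ^ 2 ∂P = (1 / (m:ℝ)) * (1 / (n:ℝ)) := by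
      have hw := integral_prod_mul (μ := μ) (ν := ν)
        (fun x : EuclideanSpace ℝ (Fin m) => (x (I ℓ')) ^ 2)
        (fun y : EuclideanSpace ℝ (Fin n) => (y (J ℓ)) ^ 2)
      rw [usph_int2 hμ (by omega) (I ℓ'), usph_int2 hν (by omega) (J ℓ)] at hw
      rw [hP]
      exact hw
    have T4 : ∫ p, (p.1 (I ℓ)) ^ 2 * (p.2 (J ℓ')) ^ 2 ∂P = (1 / (m:ℝ)) * (1 / (n:ℝ)) := by
      have hw := integral_prod_mul (μ := μ) (ν := ν)
        (fun x : EuclideanSpace ℝ (Fin m) => (x (I ℓ)) ^ 2)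
        (fun y : EuclideanSpace ℝ (Fin n) => (y (J ℓ')) ^ 2)
      rw [usph_int2 hμ (by omega) (I ℓ), usph_int2 hν (by omega) (J ℓ')] at hw
      rw [hP]
      exact hw
    have T3 : ∫ p, (p.1 (I ℓ')) * (((p.2 (J ℓ)) ^ 2 * (p.2 (J ℓ'))) * (σ ℓ')⁻¹) ∂P = 0 := by
      have hw := integral_prod_mul (μ := μ) (ν := ν)
        (fun x : EuclideanSpace ℝ (Fin m) => x (I ℓ'))
        (fun y : EuclideanSpace ℝ (Fin n) => ((y (J ℓ)) ^ 2 * (y (J ℓ'))) * (σ ℓ')⁻¹)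
      rw [usph_int1 hμ (I ℓ'), zero_mul] at hw
      rw [hP]
      exact hw
    have T7 : ∫ p, (p.1 (I ℓ)) * (((p.2 (J ℓ)) * (p.2 (J ℓ')) ^ 2) * (σ ℓ)⁻¹) ∂P = 0 := by
      have hw := integral_prod_mul (μ := μ) (ν := ν)
        (fun x : EuclideanSpace ℝ (Fin m) => x (I ℓ))
        (fun y : EuclideanSpace ℝ (Fin n) => ((y (J ℓ)) * (y (J ℓ')) ^ 2) * (σ ℓ)⁻¹)
      rw [usph_int1 hμ (I ℓ), zero_mul] at hw
      rw [hP]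
      exact hw
    have T6 : ∫ p, (((p.1 (I ℓ)) ^ 2 * (p.1 (I ℓ'))) * (σ ℓ')⁻¹) * (p.2 (J ℓ')) ∂P = 0 := by
      have hw := integral_prod_mul (μ := μ) (ν := ν)
        (fun x : EuclideanSpace ℝ (Fin m) => ((x (I ℓ)) ^ 2 * (x (I ℓ'))) * (σ ℓ')⁻¹)
        (fun y : EuclideanSpace ℝ (Fin n) => y (J ℓ'))
      rw [usph_int1 hν (J ℓ'), mul_zero] at hw
      rw [hP]
      exact hw
    have T8 : ∫ p, (((p.1 (I ℓ)) * (p.1 (I ℓ')) ^ 2) * (σ ℓ)⁻¹) * (p.2 (J ℓ)) ∂P = 0 := by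
      have hw := integral_prod_mul (μ := μ) (ν := ν)
        (fun x : EuclideanSpace ℝ (Fin m) => ((x (I ℓ)) * (x (I ℓ')) ^ 2) * (σ ℓ)⁻¹)
        (fun y : EuclideanSpace ℝ (Fin n) => y (J ℓ))
      rw [usph_int1 hν (J ℓ), mul_zero] at hw
      rw [hP]
      exact hw
    have T9 : ∫ p, (((p.1 (I ℓ)) * (p.1 (I ℓ'))) * ((σ ℓ)⁻¹ * (σ ℓ')⁻¹))
        * ((p.2 (J ℓ)) * (p.2 (J ℓ'))) ∂P = 0 := by
      have hw := integral_prod_mul (μ := μ) (ν := ν)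
        (fun x : EuclideanSpace ℝ (Fin m) => ((x (I ℓ)) * (x (I ℓ'))) * ((σ ℓ)⁻¹ * (σ ℓ')⁻¹))
        (fun y : EuclideanSpace ℝ (Fin n) => (y (J ℓ)) * (y (J ℓ')))
      rw [integral_mul_const, usph_int11 hμ (Iinj hll), zero_mul, zero_mul] at hw
      rw [hP]
      exact hw
    rw [edec2, integral_add9 j1 j2 j3 j4 j5 j6 j7 j8 j9,
      T1, T2, T3, T4, T5, T6, T7, T8, T9, hc1]
    ring
  -- combine
  have pair : ∀ ℓ ℓ' : Fin k, ∫ p, e ℓ p * e ℓ' p ∂P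
      = c1 + (if ℓ = ℓ' then ex ℓ else 0) := by
    intro ℓ ℓ'
    by_cases h : ℓ = ℓ'
    · subst h
      rw [diag ℓ, if_pos rfl]
    · rw [offdiag ℓ ℓ' h, if_neg h, add_zero]
  have sq_int : ∫ p, X p ^ 2 ∂P = (k:ℝ) ^ 2 * c1 + ∑ ℓ, ex ℓ := by
    have hdec : (fun p => X p ^ 2)
        = fun p => ∑ ℓ : Fin k, ∑ ℓ' : Fin k, e ℓ p * e ℓ' p := by
      funext p
      rw [hX, sq, Finset.sum_mul_sum]
    rw [hdec, integral_finset_sum _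
      (fun ℓ _ => integrable_finset_sum _ (fun ℓ' _ => intee ℓ ℓ'))]
    have hinner : ∀ ℓ : Fin k, ∑ ℓ' : Fin k, ∫ p, e ℓ p * e ℓ' p ∂P
        = (k:ℝ) * c1 + ex ℓ := by
      intro ℓ
      rw [Finset.sum_congr rfl (fun ℓ' _ => pair ℓ ℓ'), Finset.sum_add_distrib,
        Finset.sum_const, Finset.card_univ, Fintype.card_fin, nsmul_eq_mul,
        Finset.sum_ite_eq, if_pos (Finset.mem_univ ℓ)]
    rw [Finset.sum_congr rfl (fun ℓ _ => by
      rw [integral_finset_sum _ (fun ℓ' _ => intee ℓ ℓ'), hinner ℓ]),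
      Finset.sum_add_distrib, Finset.sum_const, Finset.card_univ, Fintype.card_fin,
      nsmul_eq_mul]
    ring
  -- wrap up
  show ProbabilityTheory.variance X P ≤ 2.01 * k * (1 / (m:ℝ) ^ 2 + 1 / (n:ℝ) ^ 2)
  rw [ProbabilityTheory.variance_eq_sub hmem]
  have hXsq : ∫ p, (X ^ 2) p ∂P = ∫ p, X p ^ 2 ∂P := by
    simp only [Pi.pow_apply]
  rw [hXsq, sq_int, mean]
  have hexval : ∑ ℓ, ex ℓ = (k:ℝ) * (2 / (n * (n + 2))) + (k:ℝ) * (2 / (m * (m + 2)))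
      + ∑ ℓ, 1 / (σ ℓ ^ 2 * m * n) := by
    rw [hex]
    rw [Finset.sum_add_distrib, Finset.sum_add_distrib, Finset.sum_const, Finset.sum_const,
      Finset.card_univ, Fintype.card_fin, nsmul_eq_mul, nsmul_eq_mul]
  have hS : ∑ ℓ, 1 / (σ ℓ ^ 2 * (m:ℝ) * n) ≤ (k:ℝ) * (1 / (σmin ^ 2 * m * n)) := by
    calc ∑ ℓ, 1 / (σ ℓ ^ 2 * (m:ℝ) * n) ≤ ∑ _ℓ : Fin k, 1 / (σmin ^ 2 * (m:ℝ) * n) := by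
          refine Finset.sum_le_sum (fun ℓ _ => ?_)
          refine one_div_le_one_div_of_le (by positivity) ?_
          have := hσsq ℓ
          have h1 : σmin ^ 2 * (m:ℝ) ≤ σ ℓ ^ 2 * m :=
            mul_le_mul_of_nonneg_right this (le_of_lt hm0)
          exact mul_le_mul_of_nonneg_right h1 (le_of_lt hn0)
      _ = (k:ℝ) * (1 / (σmin ^ 2 * m * n)) := by
          rw [Finset.sum_const, Finset.card_univ, Fintype.card_fin, nsmul_eq_mul]
  have hS2 : (k:ℝ) * (1 / (σmin ^ 2 * (m:ℝ) * n))
      ≤ (k:ℝ) * (0.01 * (1 / (m:ℝ) ^ 2 + 1 / (n:ℝ) ^ 2)) :=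
    mul_le_mul_of_nonneg_left hsmall (Nat.cast_nonneg k)
  have hfn := aux_f hnR k
  have hfm := aux_f hmR k
  have hbig : (k:ℝ) ^ 2 * c1 + ((k:ℝ) * (2 / (n * (n + 2))) + (k:ℝ) * (2 / (m * (m + 2))))
      - ((k:ℝ) * (1 / n + 1 / m)) ^ 2
      = (2 * k / ((n:ℝ) * (n + 2)) + (k : ℝ) ^ 2 / (n * (n + 2)) - k ^ 2 / n ^ 2)
        + (2 * k / ((m:ℝ) * (m + 2)) + (k : ℝ) ^ 2 / (m * (m + 2)) - k ^ 2 / m ^ 2)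
        + (k ^ 2 / n ^ 2 - k ^ 2 / n ^ 2) := by
    rw [hc1]
    field_simp
    ring
  have hfin : 2 * (k:ℝ) / n ^ 2 + 2 * (k:ℝ) / m ^ 2
      + (k:ℝ) * (0.01 * (1 / (m:ℝ) ^ 2 + 1 / (n:ℝ) ^ 2))
      = 2.01 * k * (1 / (m:ℝ) ^ 2 + 1 / (n:ℝ) ^ 2) := by
    ring
  linarith [hexval, hS, hS2, hfn, hfm, hbig, hfin]
end sphereMoments
end

section
/- Let η > 0, γ̃ ≥ 0, s ≥ 0, d ≥ 0 be real numbers, and let p, p', b, b' be real numbers with p ≥ 0, p' ≥ 0, p + p' ≤ 2.01, p' − p ≤ d, b ≥ η/(1+γ̃), b' ≥ η/(1+γ̃), and b ≤ b' + s. Then p'²/b' ≤ exp((1+γ̃)·s/η) · (p²/b) + (1+γ̃)·2.01·d/η. -/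
/-- The algebraic core of the proof of the paper's Main Result: a deterministic
inequality which, with `p = |(T_{≤k})_{ij}|`, `p' = |(T'_{≤k})_{ij}|`,
`b = |(T_{≤k})_i|²`, `b' = |(T'_{≤k})_i|²`, `s = k/n`, `d = δ(k)`, yields the
`(ε, δ)`-differential-privacy inequality for the recommendation algorithms. -/
theorem main_result_algebraic_core
    (η γt s d p p' b b' : ℝ)
    (hη : 0 < η) (hγt : 0 ≤ γt) (hs : 0 ≤ s) (hd : 0 ≤ d)
    (hp : 0 ≤ p) (hp' : 0 ≤ p')
    (hsum : p + p' ≤ 2.01) (hdiff : p' - p ≤ d)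
    (hb : η / (1 + γt) ≤ b) (hb' : η / (1 + γt) ≤ b')
    (hbb' : b ≤ b' + s) :
    p' ^ 2 / b' ≤
      Real.exp ((1 + γt) * s / η) * (p ^ 2 / b) + (1 + γt) * 2.01 * d / η := by
  have h1γ : (0:ℝ) < 1 + γt := by linarith
  have hq : 0 < η / (1 + γt) := div_pos hη h1γ
  have hbpos : 0 < b := lt_of_lt_of_le hq hb
  have hb'pos : 0 < b' := lt_of_lt_of_le hq hb'
  have hcb : η ≤ (1 + γt) * b := by
    rw [div_le_iff₀ h1γ] at hb; linarith
  have hcb' : η ≤ (1 + γt) * b' := by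
    rw [div_le_iff₀ h1γ] at hb'; linarith
  have hexp : 1 + (1 + γt) * s / η ≤ Real.exp ((1 + γt) * s / η) := by
    have := Real.add_one_le_exp ((1 + γt) * s / η); linarith
  have hA : 0 ≤ p ^ 2 / b := by positivity
  have hkey : p' ^ 2 ≤ p ^ 2 + 2.01 * d := by nlinarith
  have hmid : p' ^ 2 / b' ≤ (1 + (1 + γt) * s / η) * (p ^ 2 / b) + (1 + γt) * 2.01 * d / η := by
    rw [div_le_iff₀ hb'pos]
    have e1 : (1 + (1 + γt) * s / η) * (p ^ 2 / b) = (η + (1 + γt) * s) * p ^ 2 / (η * b) := by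
      field_simp
    have e2 : (η + (1 + γt) * s) * p ^ 2 / (η * b) * b' + (1 + γt) * 2.01 * d / η * b' =
        ((η + (1 + γt) * s) * p ^ 2 * b' + (1 + γt) * 2.01 * d * b * b') / (η * b) := by
      field_simp
    rw [add_mul, e1, e2, le_div_iff₀ (by positivity)]
    nlinarith [mul_nonneg (mul_nonneg (sq_nonneg p) hs) (sub_nonneg.2 hcb'),
      mul_nonneg (mul_nonneg hd hbpos.le) (sub_nonneg.2 hcb'),
      mul_le_mul_of_nonneg_right hkey (mul_nonneg hbpos.le hη.le),
      mul_le_mul_of_nonneg_right hbb' (mul_nonneg (sq_nonneg p) hη.le)]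
  calc p' ^ 2 / b' ≤ (1 + (1 + γt) * s / η) * (p ^ 2 / b) + (1 + γt) * 2.01 * d / η := hmid
    _ ≤ Real.exp ((1 + γt) * s / η) * (p ^ 2 / b) + (1 + γt) * 2.01 * d / η := by nlinarith
end
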